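/- Let (X,ρ) be a proper locally compact non-compact metric space, let H and K be Banach X-modules whose structural morphisms of C₀(X) are restrictions of unital continuous algebra morphisms φ ↦ φ(Q) of C_b(X) into B(H), respectively B(K), and let S ∈ B(H,K). If there is a constant C such that for every bounded real Lipschitz function θ on X one has ‖S∘θ(Q) − θ(Q)∘S‖ ≤ C·Lip(θ), then S is decay preserving. -/

import Mathlib

open ContinuousLinearMap

noncomputable section

variable {H K : Type*}

/-- `M` is the multiplier algebra of a Banach module structure on `H`: a non-degenerate
norm-closed subalgebra of `B(H)` possessing a bounded approximate unit. -/
structure IsBanachModule (H : Type*) [NormedAddCommGroup H] [NormedSpace ℂ H]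
    (M : Set (H →L[ℂ] H)) : Prop where
  zero_mem : (0 : H →L[ℂ] H) ∈ M
  add_mem : ∀ {A B : H →L[ℂ] H}, A ∈ M → B ∈ M → A + B ∈ M
  smul_mem : ∀ (c : ℂ) {A : H →L[ℂ] H}, A ∈ M → c • A ∈ M
  mul_mem : ∀ {A B : H →L[ℂ] H}, A ∈ M → B ∈ M → A.comp B ∈ M
  isClosed : IsClosed M
  nondegenerate : Dense (↑(Submodule.span ℂ {u : H | ∃ A ∈ M, ∃ v : H, u = A v}) : Set H)
  approx_unit : ∃ C : ℝ, ∀ ε > (0 : ℝ), ∀ F : Finset (H →L[ℂ] H), ↑F ⊆ M →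
    ∃ J ∈ M, ‖J‖ ≤ C ∧ ∀ A ∈ F, ‖J.comp A - A‖ ≤ ε ∧ ‖A.comp J - A‖ ≤ ε

/-- A Hilbert module: a Banach module on a Hilbert space whose multiplier algebra is a
C*-algebra of operators (i.e. is moreover closed under adjoints). -/
structure IsHilbertModule (H : Type*) [NormedAddCommGroup H] [InnerProductSpace ℂ H]
    [CompleteSpace H] (M : Set (H →L[ℂ] H)) extends IsBanachModule H M : Prop where
  star_mem : ∀ {A : H →L[ℂ] H}, A ∈ M → ContinuousLinearMap.adjoint A ∈ M

/-- `B₀ˡ(H,K)`: the closed linear span of the operators `A ∘ T` with `A` in the multiplier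
algebra of `K` and `T ∈ B(H,K)` (operators left vanishing at infinity). -/
def B0l [NormedAddCommGroup H] [NormedSpace ℂ H] [NormedAddCommGroup K] [NormedSpace ℂ K]
    (MK : Set (K →L[ℂ] K)) : Set (H →L[ℂ] K) :=
  closure (↑(Submodule.span ℂ
    {S : H →L[ℂ] K | ∃ A ∈ MK, ∃ T : H →L[ℂ] K, S = A.comp T}) : Set (H →L[ℂ] K))

/-- `B₀ʳ(H,K)`: the closed linear span of the operators `T ∘ A` with `A` in the multiplier
algebra of `H` and `T ∈ B(H,K)` (operators right vanishing at infinity). -/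
def B0r [NormedAddCommGroup H] [NormedSpace ℂ H] [NormedAddCommGroup K] [NormedSpace ℂ K]
    (MH : Set (H →L[ℂ] H)) : Set (H →L[ℂ] K) :=
  closure (↑(Submodule.span ℂ
    {S : H →L[ℂ] K | ∃ A ∈ MH, ∃ T : H →L[ℂ] K, S = T.comp A}) : Set (H →L[ℂ] K))

/-- `S ∈ B(H,K)` is left decay preserving. -/
def LeftDecayPreserving [NormedAddCommGroup H] [NormedSpace ℂ H] [NormedAddCommGroup K]
    [NormedSpace ℂ K] (MH : Set (H →L[ℂ] H)) (MK : Set (K →L[ℂ] K))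
    (S : H →L[ℂ] K) : Prop :=
  ∀ A ∈ MH, S.comp A ∈ B0l MK

/-- `S ∈ B(H,K)` is right decay preserving. -/
def RightDecayPreserving [NormedAddCommGroup H] [NormedSpace ℂ H] [NormedAddCommGroup K]
    [NormedSpace ℂ K] (MH : Set (H →L[ℂ] H)) (MK : Set (K →L[ℂ] K))
    (S : H →L[ℂ] K) : Prop :=
  ∀ A ∈ MK, A.comp S ∈ B0r MH

open scoped BoundedContinuousFunction NNReal

/-- A Banach `X`-module whose structural morphism of `C₀(X)` is (the restriction of) a
unital continuous algebra morphism `φ ↦ φ(Q)` of `C_b(X)` into `B(H)`; nondegeneracy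
refers to the action of the functions vanishing at infinity. -/
structure BanachXModuleCb (X : Type*) [TopologicalSpace X]
    (H : Type*) [NormedAddCommGroup H] [NormedSpace ℂ H] [CompleteSpace H] where
  Q : (X →ᵇ ℂ) →ₐ[ℂ] (H →L[ℂ] H)
  continuous_Q : Continuous Q
  nondegenerate : Dense
    (↑(Submodule.span ℂ {u : H | ∃ φ : X →ᵇ ℂ,
      Filter.Tendsto ⇑φ (Filter.cocompact X) (nhds 0) ∧ ∃ v : H, u = Q φ v}) : Set H)

/-- The multiplier algebra: the norm closure of `{φ(Q) : φ ∈ C₀(X)}`. -/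
def BanachXModuleCb.mult {X : Type*} [TopologicalSpace X] {H : Type*} [NormedAddCommGroup H]
    [NormedSpace ℂ H] [CompleteSpace H] (B : BanachXModuleCb X H) : Set (H →L[ℂ] H) :=
  closure {A : H →L[ℂ] H | ∃ φ : X →ᵇ ℂ,
    Filter.Tendsto ⇑φ (Filter.cocompact X) (nhds 0) ∧ A = B.Q φ}

/-! The radial cutoffs `θ_r`, equal to `1` on the ball of radius `r` about a base point, to `0`
outside the ball of radius `2r`, and `r⁻¹`-Lipschitz, form an approximate unit of `C₀(X)`:
`θ_r φ → φ` uniformly for `φ ∈ C₀(X)`. By hypothesis `‖[S, θ_r(Q)]‖ ≤ C / r → 0`, hence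
`θ_r(Q) S φ(Q) = S (θ_r φ)(Q) - [S, θ_r(Q)] φ(Q) → S φ(Q)` and likewise
`φ(Q) S θ_r(Q) → φ(Q) S`. The approximants lie in `B₀ˡ`, resp. `B₀ʳ`, which are closed, and
closedness also carries the conclusion from the generators `φ(Q)` to their closure. -/

open Filter Topology

section RadialCutoff

variable {X : Type*} [PseudoMetricSpace X] (x₀ : X) (r : ℝ≥0)

def radialCutoffReal (x : X) : ℝ := max 0 (min 1 (2 - dist x x₀ / r))

lemma radialCutoffReal_nonneg (x : X) : 0 ≤ radialCutoffReal x₀ r x := le_max_left _ _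

lemma radialCutoffReal_le_one (x : X) : radialCutoffReal x₀ r x ≤ 1 :=
  max_le zero_le_one (min_le_left _ _)

lemma continuous_radialCutoffReal : Continuous (radialCutoffReal x₀ r) := by
  unfold radialCutoffReal; fun_prop

def radialCutoff : X →ᵇ ℂ :=
  .ofNormedAddCommGroup (fun x => (radialCutoffReal x₀ r x : ℂ))
    (Complex.continuous_ofReal.comp (continuous_radialCutoffReal x₀ r)) 1 fun x => by
      rw [Complex.norm_real, Real.norm_of_nonneg (radialCutoffReal_nonneg x₀ r x)]
      exact radialCutoffReal_le_one x₀ r x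

lemma radialCutoff_apply (x : X) : radialCutoff x₀ r x = radialCutoffReal x₀ r x := rfl

lemma radialCutoff_im (x : X) : (radialCutoff x₀ r x).im = 0 := Complex.ofReal_im _

variable {x₀ r}

lemma radialCutoff_eq_one {x : X} (hx : dist x x₀ ≤ r) : radialCutoff x₀ r x = 1 := by
  have : dist x x₀ / r ≤ 1 := div_le_one_of_le₀ hx r.2
  rw [radialCutoff_apply, radialCutoffReal, min_eq_left (by linarith),
    max_eq_right zero_le_one, Complex.ofReal_one]

lemma radialCutoff_eq_zero (hr : 0 < r) {x : X} (hx : 2 * r ≤ dist x x₀) :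
    radialCutoff x₀ r x = 0 := by
  have : 2 ≤ dist x x₀ / r := (le_div_iff₀ (NNReal.coe_pos.2 hr)).2 hx
  rw [radialCutoff_apply, radialCutoffReal, max_eq_left (min_le_of_right_le (by linarith)),
    Complex.ofReal_zero]

lemma norm_radialCutoff_sub_one_le (x : X) : ‖radialCutoff x₀ r x - 1‖ ≤ 1 := by
  rw [radialCutoff_apply, ← Complex.ofReal_one, ← Complex.ofReal_sub, Complex.norm_real,
    Real.norm_eq_abs, abs_le]
  constructor <;> linarith [radialCutoffReal_nonneg x₀ r x, radialCutoffReal_le_one x₀ r x]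

lemma lipschitzWith_radialCutoff (hr : 0 < r) : LipschitzWith r⁻¹ (radialCutoff x₀ r) := by
  have hr' : (0 : ℝ) < r := hr
  have affine : LipschitzWith r⁻¹ fun x : X => 2 - dist x x₀ / r :=
    LipschitzWith.of_dist_le_mul fun x y => by
      rw [Real.dist_eq, show 2 - dist x x₀ / r - (2 - dist y x₀ / r)
        = (dist y x₀ - dist x x₀) / r by ring, abs_div, abs_of_pos hr', NNReal.coe_inv,
        abs_sub_comm, inv_mul_eq_div]
      exact div_le_div_of_nonneg_right (abs_dist_sub_le x y x₀) hr'.le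
  have := Complex.isometry_ofReal.lipschitz.comp ((affine.const_min 1).const_max 0)
  rwa [one_mul] at this

lemma tendsto_radialCutoff_cocompact [ProperSpace X] (hr : 0 < r) :
    Tendsto (radialCutoff x₀ r) (cocompact X) (𝓝 0) := by
  refine tendsto_const_nhds.congr' (EventuallyEq.symm ?_)
  filter_upwards [(isCompact_closedBall x₀ (2 * r)).compl_mem_cocompact] with x hx
  exact radialCutoff_eq_zero hr (le_of_lt (by simpa using hx))

lemma tendsto_radialCutoff_mul [ProperSpace X] (x₀ : X) (φ : X →ᵇ ℂ)
    (hφ : Tendsto φ (cocompact X) (𝓝 0)) :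
    Tendsto (fun r => radialCutoff x₀ r * φ) atTop (𝓝 φ) := by
  refine Metric.tendsto_nhds.2 fun ε hε => ?_
  obtain ⟨Kc, hKc, hφ_small⟩ :=
    mem_cocompact.1 (Metric.tendsto_nhds.1 hφ (ε / 2) (half_pos hε))
  obtain ⟨R, hR⟩ := hKc.isBounded.subset_closedBall x₀
  filter_upwards [eventually_ge_atTop R.toNNReal] with r hr
  refine ((BoundedContinuousFunction.dist_le (half_pos hε).le).2 fun x => ?_).trans_lt
    (half_lt_self hε)
  rw [BoundedContinuousFunction.mul_apply, dist_eq_norm, ← sub_one_mul, norm_mul]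
  by_cases hx : dist x x₀ ≤ r
  · simpa [radialCutoff_eq_one hx] using (half_pos hε).le
  · have hxK : x ∉ Kc := fun hxK => hx ((hR hxK).trans (Real.toNNReal_le_iff_le_coe.1 hr))
    have hφx : ‖φ x‖ < ε / 2 := by simpa using hφ_small hxK
    simpa using mul_le_mul (norm_radialCutoff_sub_one_le x) hφx.le (norm_nonneg _) zero_le_one

end RadialCutoff

section DecaySpaces

variable [NormedAddCommGroup H] [NormedSpace ℂ H] [NormedAddCommGroup K] [NormedSpace ℂ K]

lemma isClosed_B0l (MK : Set (K →L[ℂ] K)) : IsClosed (B0l (H := H) MK) := isClosed_closure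

lemma isClosed_B0r (MH : Set (H →L[ℂ] H)) : IsClosed (B0r (K := K) MH) := isClosed_closure

lemma comp_mem_B0l {MK : Set (K →L[ℂ] K)} {A : K →L[ℂ] K} (hA : A ∈ MK) (T : H →L[ℂ] K) :
    A.comp T ∈ B0l MK :=
  subset_closure (Submodule.subset_span ⟨A, hA, T, rfl⟩)

lemma comp_mem_B0r {MH : Set (H →L[ℂ] H)} {A : H →L[ℂ] H} (hA : A ∈ MH) (T : H →L[ℂ] K) :
    T.comp A ∈ B0r MH :=
  subset_closure (Submodule.subset_span ⟨A, hA, T, rfl⟩)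

end DecaySpaces

namespace BanachXModuleCb

variable {X : Type*} [TopologicalSpace X]
  [NormedAddCommGroup H] [NormedSpace ℂ H] [CompleteSpace H]
  [NormedAddCommGroup K] [NormedSpace ℂ K] [CompleteSpace K]
  (BH : BanachXModuleCb X H) (BK : BanachXModuleCb X K) (S : H →L[ℂ] K)

lemma Q_mem_mult {φ : X →ᵇ ℂ} (hφ : Tendsto φ (cocompact X) (𝓝 0)) : BH.Q φ ∈ BH.mult :=
  subset_closure ⟨φ, hφ, rfl⟩

lemma leftDecayPreserving_of_comp_Q_mem
    (h : ∀ φ : X →ᵇ ℂ, Tendsto φ (cocompact X) (𝓝 0) → S.comp (BH.Q φ) ∈ B0l BK.mult) :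
    LeftDecayPreserving BH.mult BK.mult S := fun _ hA =>
  Set.MapsTo.closure_left (by rintro _ ⟨φ, hφ, rfl⟩; exact h φ hφ)
    (continuous_const.clm_comp continuous_id) (isClosed_B0l _) hA

lemma rightDecayPreserving_of_Q_comp_mem
    (h : ∀ φ : X →ᵇ ℂ, Tendsto φ (cocompact X) (𝓝 0) → (BK.Q φ).comp S ∈ B0r BH.mult) :
    RightDecayPreserving BH.mult BK.mult S := fun _ hA =>
  Set.MapsTo.closure_left (by rintro _ ⟨φ, hφ, rfl⟩; exact h φ hφ)
    (continuous_id.clm_comp continuous_const) (isClosed_B0r _) hA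

variable {BH BK S} {ι : Type*} {l : Filter ι} [l.NeBot] {θ : ι → X →ᵇ ℂ}

theorem leftDecayPreserving_of_tendsto_commutator
    (hθ : ∀ᶠ i in l, Tendsto (θ i) (cocompact X) (𝓝 0))
    (hθφ : ∀ φ : X →ᵇ ℂ, Tendsto φ (cocompact X) (𝓝 0) → Tendsto (fun i => θ i * φ) l (𝓝 φ))
    (hcomm : Tendsto (fun i => S.comp (BH.Q (θ i)) - (BK.Q (θ i)).comp S) l (𝓝 0)) :
    LeftDecayPreserving BH.mult BK.mult S := by
  refine leftDecayPreserving_of_comp_Q_mem BH BK S fun φ hφ => ?_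
  have hsplit : ∀ i, S.comp (BH.Q (θ i * φ)) - (S.comp (BH.Q (θ i)) - (BK.Q (θ i)).comp S).comp
      (BH.Q φ) = (BK.Q (θ i)).comp (S.comp (BH.Q φ)) := fun i => by
    rw [map_mul, mul_def]; ext; simp
  have h1 : Tendsto (fun i => S.comp (BH.Q (θ i * φ))) l (𝓝 (S.comp (BH.Q φ))) :=
    ((compL ℂ H H K S).continuous.tendsto _).comp ((BH.continuous_Q.tendsto φ).comp (hθφ φ hφ))
  have h2 : Tendsto (fun i => (S.comp (BH.Q (θ i)) - (BK.Q (θ i)).comp S).comp (BH.Q φ)) l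
      (𝓝 0) :=
    (((compL ℂ H H K).flip (BH.Q φ)).continuous.tendsto' 0 0 (map_zero _)).comp hcomm
  have hlim := h1.sub h2
  simp only [hsplit, sub_zero] at hlim
  exact (isClosed_B0l _).mem_of_tendsto hlim
    (hθ.mono fun i hi => comp_mem_B0l (BK.Q_mem_mult hi) _)

theorem rightDecayPreserving_of_tendsto_commutator
    (hθ : ∀ᶠ i in l, Tendsto (θ i) (cocompact X) (𝓝 0))
    (hθφ : ∀ φ : X →ᵇ ℂ, Tendsto φ (cocompact X) (𝓝 0) → Tendsto (fun i => θ i * φ) l (𝓝 φ))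
    (hcomm : Tendsto (fun i => S.comp (BH.Q (θ i)) - (BK.Q (θ i)).comp S) l (𝓝 0)) :
    RightDecayPreserving BH.mult BK.mult S := by
  refine rightDecayPreserving_of_Q_comp_mem BH BK S fun φ hφ => ?_
  have hsplit : ∀ i, (BK.Q (θ i * φ)).comp S + (BK.Q φ).comp (S.comp (BH.Q (θ i)) -
      (BK.Q (θ i)).comp S) = ((BK.Q φ).comp S).comp (BH.Q (θ i)) := fun i => by
    rw [mul_comm, map_mul, mul_def]; ext; simp
  have h1 : Tendsto (fun i => (BK.Q (θ i * φ)).comp S) l (𝓝 ((BK.Q φ).comp S)) :=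
    (((compL ℂ H K K).flip S).continuous.tendsto _).comp
      ((BK.continuous_Q.tendsto φ).comp (hθφ φ hφ))
  have h2 : Tendsto (fun i => (BK.Q φ).comp (S.comp (BH.Q (θ i)) - (BK.Q (θ i)).comp S)) l
      (𝓝 0) :=
    ((compL ℂ H K K (BK.Q φ)).continuous.tendsto' 0 0 (map_zero _)).comp hcomm
  have hlim := h1.add h2
  simp only [hsplit, add_zero] at hlim
  exact (isClosed_B0r _).mem_of_tendsto hlim
    (hθ.mono fun i hi => comp_mem_B0r (BH.Q_mem_mult hi) _)

end BanachXModuleCb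

lemma BanachXModuleCb.tendsto_commutator_radialCutoff {X : Type*} [MetricSpace X]
    [NormedAddCommGroup H] [NormedSpace ℂ H] [CompleteSpace H]
    [NormedAddCommGroup K] [NormedSpace ℂ K] [CompleteSpace K]
    {BH : BanachXModuleCb X H} {BK : BanachXModuleCb X K} {S : H →L[ℂ] K} {C : ℝ}
    (hC : ∀ φ : X →ᵇ ℂ, (∀ x, (φ x).im = 0) → ∀ L : ℝ≥0, LipschitzWith L ⇑φ →
      ‖S.comp (BH.Q φ) - (BK.Q φ).comp S‖ ≤ C * L) (x₀ : X) :
    Tendsto (fun r => S.comp (BH.Q (radialCutoff x₀ r)) - (BK.Q (radialCutoff x₀ r)).comp S)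
      atTop (𝓝 0) := by
  refine squeeze_zero_norm' ?_
    (by simpa using (NNReal.tendsto_coe.2 tendsto_inv_atTop_zero).const_mul C)
  filter_upwards [eventually_gt_atTop 0] with r hr
  exact hC _ (radialCutoff_im x₀ r) _ (lipschitzWith_radialCutoff hr)

/-- Let `(X,ρ)` be a proper locally compact non-compact metric space and
`H`, `K` Banach `X`-modules whose structural morphisms extend to `C_b(X)`.  If there is a
constant `C` such that `‖S φ(Q) − φ(Q) S‖ ≤ C Lip(φ)` for every bounded real Lipschitz
function `φ` on `X`, then `S` is decay preserving. -/
theorem stmt3 {X : Type*} [MetricSpace X] [ProperSpace X] [NoncompactSpace X]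
    {H K : Type*} [NormedAddCommGroup H] [NormedSpace ℂ H] [CompleteSpace H]
    [NormedAddCommGroup K] [NormedSpace ℂ K] [CompleteSpace K]
    (BH : BanachXModuleCb X H) (BK : BanachXModuleCb X K)
    (S : H →L[ℂ] K)
    (hcomm : ∃ C : ℝ, ∀ φ : X →ᵇ ℂ, (∀ x, (φ x).im = 0) →
      ∀ L : ℝ≥0, LipschitzWith L ⇑φ →
        ‖S.comp (BH.Q φ) - (BK.Q φ).comp S‖ ≤ C * L) :
    LeftDecayPreserving BH.mult BK.mult S ∧ RightDecayPreserving BH.mult BK.mult S := by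
  obtain ⟨C, hC⟩ := hcomm
  obtain ⟨x₀⟩ : Nonempty X := nonempty_of_neBot (cocompact X)
  have hθ : ∀ᶠ r in atTop, Tendsto (radialCutoff x₀ r) (cocompact X) (𝓝 0) :=
    (eventually_gt_atTop 0).mono fun _ hr => tendsto_radialCutoff_cocompact hr
  have hD := BanachXModuleCb.tendsto_commutator_radialCutoff hC x₀
  exact ⟨BanachXModuleCb.leftDecayPreserving_of_tendsto_commutator hθ
      (tendsto_radialCutoff_mul x₀) hD,
    BanachXModuleCb.rightDecayPreserving_of_tendsto_commutator hθ
      (tendsto_radialCutoff_mul x₀) hD⟩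

end
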